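/- arXiv:1910.09190 — 4 statements merged into one kernel-verified Lean document; each statement's English description precedes it below -/
import Mathlib

section
/- An identity w ≈ w' holds in every Rees matrix semigroup over an abelian group if and only if: (a) w and w' begin with the same letter; (b) w and w' end with the same letter; (c) for every word v of length 2, the number of occurrences of v as a factor of w equals the number of its occurrences as a factor of w'. -/
set_option linter.unnecessarySeqFocus false

/-- The Rees matrix multiplication on `(I × G × Λ) ∪ {0}`, with `0` modelled by `none`. -/
def reesMul {I G Λ : Type*} [Group G] (P : Λ → I → Option G) :
    Option (I × G × Λ) → Option (I × G × Λ) → Option (I × G × Λ)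
  | some (i, g, l), some (j, h, m) => (P l j).map fun p => (i, g * p * h, m)
  | _, _ => none

theorem reesMul_assoc {I G Λ : Type*} [Group G] (P : Λ → I → Option G)
    (a b c : Option (I × G × Λ)) :
    reesMul P (reesMul P a b) c = reesMul P a (reesMul P b c) := by
  rcases a with _ | ⟨i, g, l⟩ <;> rcases b with _ | ⟨j, h, m⟩ <;>
    rcases c with _ | ⟨k, f, r⟩ <;> simp [reesMul] <;>
    rcases hlj : P l j with _ | p <;> rcases hmk : P m k with _ | q <;>
    simp [reesMul, hlj, hmk, mul_assoc]

/-- The Rees matrix semigroup `M⁰(I, G, Λ; P)` over the group `G`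
with sandwich matrix `P`. -/
def ReesMatrixSemigroup (I G Λ : Type*) [Group G] (P : Λ → I → Option G) :=
  Option (I × G × Λ)

instance {I G Λ : Type*} [Group G] (P : Λ → I → Option G) :
    Semigroup (ReesMatrixSemigroup I G Λ P) where
  mul := reesMul P
  mul_assoc := reesMul_assoc P

/-- The list of letters of a word in the free semigroup. -/
def letters {X : Type*} (w : FreeSemigroup X) : List X := w.head :: w.tail

/-!
In `M⁰(I, G, Λ; P)` a product of nonzero elements `(iₖ, gₖ, λₖ)`, `k = 1, …, n`, is either `0`
or `(i₁, g₁ p_{λ₁ i₂} g₂ ⋯ p_{λₙ₋₁ iₙ} gₙ, λₙ)`. Over an abelian group the middle factor only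
depends on the first letter and the multiset of factors of length 2 of the word (the remaining
letters are the second coordinates of those factors), so the image of a word is determined by its
first letter, its last letter and these factors.

Conversely, take `I = Λ = Bool`, send each letter `z` to `([z = y], 1, [z = x])` and let the
sandwich matrix be `g` at `(true, true)` and `1` elsewhere: a word `w` then evaluates to
`([w starts with y], g ^ #(occurrences of xy in w), [w ends with x])`, and for `g` of infinite
order this reads off all three conditions.
-/

section Words

variable {X : Type*}

def lastLetter (w : FreeSemigroup X) : X := (letters w).getLast (List.cons_ne_nil _ _)

def adjacentPairs (w : FreeSemigroup X) : List (X × X) := (letters w).zip (letters w).tail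

@[simp] theorem lastLetter_of_mul (a : X) (w : FreeSemigroup X) :
    lastLetter (FreeSemigroup.of a * w) = lastLetter w :=
  List.getLast_cons _

@[simp] theorem adjacentPairs_of (a : X) : adjacentPairs (FreeSemigroup.of a) = [] := rfl

@[simp] theorem adjacentPairs_of_mul (a : X) (w : FreeSemigroup X) :
    adjacentPairs (FreeSemigroup.of a * w) = (a, w.head) :: adjacentPairs w :=
  rfl

end Words

namespace ReesMatrixSemigroup

variable {X I G Λ : Type*}

def groupPart : Option (I × G × Λ) → WithZero G
  | some (_, g, _) => g
  | none => 0

def sandwichEntry (P : Λ → I → Option G) : Option (I × G × Λ) → Option (I × G × Λ) → WithZero G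
  | some (_, _, l), some (j, _, _) => (P l j).elim 0 (↑)
  | _, _ => 0

def ofEnds (s t : Option (I × G × Λ)) (c : WithZero G) : Option (I × G × Λ) :=
  match s, t with
  | some (i, _, _), some (_, _, l) => WithZero.recZeroCoe none (fun g => some (i, g, l)) c
  | _, _ => none

theorem ofEnds_self (x : Option (I × G × Λ)) : ofEnds x x (groupPart x) = x := by
  rcases x with _ | ⟨i, g, l⟩ <;> rfl

theorem reesMul_ofEnds [Group G] (P : Λ → I → Option G) (x s t : Option (I × G × Λ))
    (c : WithZero G) :
    reesMul P x (ofEnds s t c) = ofEnds x t (groupPart x * sandwichEntry P x s * c) := by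
  rcases x with _ | ⟨i, g, l⟩ <;> rcases s with _ | ⟨j, h, m⟩ <;> rcases t with _ | ⟨k, f, n⟩
  all_goals try rfl
  all_goals induction c using WithZero.recZeroCoe <;> rcases hp : P l j with _ | p <;>
    simp [ofEnds, sandwichEntry, reesMul, hp, groupPart, ← WithZero.coe_mul]

def pathWeight [Monoid G] (P : Λ → I → Option G) (f : X → Option (I × G × Λ))
    (w : FreeSemigroup X) : WithZero G :=
  groupPart (f w.head) *
    ((adjacentPairs w).map fun q => sandwichEntry P (f q.1) (f q.2) * groupPart (f q.2)).prod

theorem lift_eq_ofEnds [Group G] (P : Λ → I → Option G) (f : X → ReesMatrixSemigroup I G Λ P)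
    (w : FreeSemigroup X) :
    FreeSemigroup.lift f w = ofEnds (f w.head) (f (lastLetter w)) (pathWeight P f w) := by
  induction w with
  | ih1 a =>
    simp only [pathWeight, adjacentPairs_of, List.map_nil, List.prod_nil, mul_one]
    exact (ofEnds_self (f a)).symm
  | ih2 a w _ ih =>
    rw [FreeSemigroup.lift_of_mul, ih]
    refine (reesMul_ofEnds P _ _ _ _).trans ?_
    simp [pathWeight, mul_assoc]

theorem pathWeight_eq_of_perm [CommMonoid G] (P : Λ → I → Option G) (f : X → Option (I × G × Λ))
    {w w' : FreeSemigroup X} (hhead : w.head = w'.head)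
    (hpairs : (adjacentPairs w).Perm (adjacentPairs w')) :
    pathWeight P f w = pathWeight P f w' := by
  rw [pathWeight, pathWeight, hhead, (hpairs.map _).prod_eq]

theorem lift_eq_lift_of_perm [CommGroup G] (P : Λ → I → Option G)
    (f : X → ReesMatrixSemigroup I G Λ P) {w w' : FreeSemigroup X} (hhead : w.head = w'.head)
    (hlast : lastLetter w = lastLetter w') (hpairs : (adjacentPairs w).Perm (adjacentPairs w')) :
    FreeSemigroup.lift f w = FreeSemigroup.lift f w' := by
  rw [lift_eq_ofEnds, lift_eq_ofEnds, hhead, hlast, pathWeight_eq_of_perm P f hhead hpairs]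

def flagSandwich [One G] (g : G) : ULift Bool → ULift Bool → Option G :=
  fun l i => some (if l.down && i.down then g else 1)

def flagMap [Group G] [DecidableEq X] (g : G) (x y : X) :
    X → ReesMatrixSemigroup (ULift Bool) G (ULift Bool) (flagSandwich g) :=
  fun z => some (⟨z = y⟩, 1, ⟨z = x⟩)

theorem lift_flagMap [Group G] [DecidableEq X] (g : G) (x y : X) (w : FreeSemigroup X) :
    FreeSemigroup.lift (flagMap g x y) w =
      some (⟨w.head = y⟩, g ^ (adjacentPairs w).count (x, y), ⟨lastLetter w = x⟩) := by
  have hentry (q : X × X) :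
      sandwichEntry (flagSandwich g) (flagMap g x y q.1) (flagMap g x y q.2) *
        groupPart (flagMap g x y q.2) = if q = (x, y) then (g : WithZero G) else 1 := by
    obtain ⟨a, b⟩ := q
    simp only [sandwichEntry, groupPart, flagMap, flagSandwich, Prod.mk.injEq]
    split_ifs <;> simp_all
  have hweight : pathWeight (flagSandwich g) (flagMap g x y) w =
      ↑(g ^ (adjacentPairs w).count (x, y)) := by
    unfold pathWeight
    rw [List.map_congr_left fun q _ => hentry q,
      List.prod_map_eq_pow_single (x, y) _ fun q hq _ => if_neg hq]
    simp only [groupPart, flagMap, WithZero.coe_one, ↓reduceIte, one_mul, WithZero.coe_pow]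
    -- `prod_map_eq_pow_single` counts with `DecidableEq`, `adjacentPairs w` with the `BEq` of pairs
    congr
    exact lawful_beq_subsingleton _ _
  rw [lift_eq_ofEnds, hweight]
  rfl

theorem lift_flagMap_eq_iff [Group G] [DecidableEq X] (g : G) (x y : X)
    (w w' : FreeSemigroup X) :
    FreeSemigroup.lift (flagMap g x y) w = FreeSemigroup.lift (flagMap g x y) w' ↔
      (w.head = y ↔ w'.head = y) ∧
        g ^ (adjacentPairs w).count (x, y) = g ^ (adjacentPairs w').count (x, y) ∧
        (lastLetter w = x ↔ lastLetter w' = x) := by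
  rw [lift_flagMap, lift_flagMap]
  exact Option.some_inj.trans (by simp)

end ReesMatrixSemigroup

theorem pow_ofAdd_one_injective : Function.Injective fun n : ℕ =>
    (Multiplicative.ofAdd (ULift.up 1 : ULift ℤ)) ^ n := by
  intro n m h
  simpa using congrArg (fun u => (Multiplicative.toAdd u).down) h

theorem stmt_7_general {X : Type u} [DecidableEq X]
    (w w' : FreeSemigroup X) :
    (∀ (I Λ G : Type v) [CommGroup G] [Nonempty I] [Nonempty Λ]
        (P : Λ → I → Option G)
        (φ : FreeSemigroup X →ₙ* ReesMatrixSemigroup I G Λ P), φ w = φ w') ↔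
      (w.head = w'.head ∧
        (letters w).getLast (List.cons_ne_nil _ _) =
          (letters w').getLast (List.cons_ne_nil _ _) ∧
        ∀ x y : X, ((letters w).zip (letters w).tail).count (x, y) =
          ((letters w').zip (letters w').tail).count (x, y)) := by
  constructor
  · intro h
    have hflag (x y : X) := (ReesMatrixSemigroup.lift_flagMap_eq_iff _ x y w w').1 <|
      h _ _ _ _ (FreeSemigroup.lift
        (ReesMatrixSemigroup.flagMap (Multiplicative.ofAdd (ULift.up.{v} (1 : ℤ))) x y))
    exact ⟨((hflag w.head w.head).1.1 rfl).symm, ((hflag (lastLetter w) w.head).2.2.1 rfl).symm,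
      fun x y => pow_ofAdd_one_injective (hflag x y).2.1⟩
  · rintro ⟨hhead, hlast, hpairs⟩ I Λ G _ _ _ P φ
    rw [← FreeSemigroup.lift_comp_of' φ]
    exact ReesMatrixSemigroup.lift_eq_lift_of_perm P _ hhead hlast
      (List.perm_iff_count.2 fun q => hpairs q.1 q.2)

/-- An identity `w ≈ w'` holds in every Rees matrix semigroup over an abelian group
if and only if: (a) `w` and `w'` begin with the same letter; (b) `w` and `w'` end with
the same letter; (c) every word of length 2 occurs as a factor the same number of times
in `w` as in `w'`. -/
theorem stmt_7 {X : Type u} [DecidableEq X] [Countable X] [Infinite X]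
    (w w' : FreeSemigroup X) :
    (∀ (I Λ G : Type v) [CommGroup G] [Nonempty I] [Nonempty Λ]
        (P : Λ → I → Option G)
        (φ : FreeSemigroup X →ₙ* ReesMatrixSemigroup I G Λ P), φ w = φ w') ↔
      (w.head = w'.head ∧
        (letters w).getLast (List.cons_ne_nil _ _) =
          (letters w').getLast (List.cons_ne_nil _ _) ∧
        ∀ x y : X, ((letters w).zip (letters w).tail).count (x, y) =
          ((letters w').zip (letters w').tail).count (x, y)) :=
  stmt_7_general w w'
end

section
/- Let S be a semigroup and S¹ the monoid obtained by adjoining an identity if necessary. The monoid S¹ satisfies an identity w ≈ w' with content(w) = content(w') if and only if for each proper subset Y of content(w), the identity w_Y ≈ w'_Y holds in S, where w_Y denotes the word obtained from w by deleting all occurrences of letters in Y (with the empty subset Y giving w itself). -/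
/-- The product of a nonempty word under a substitution `φ` into a semigroup
(`none` for the empty word). -/
def sprod {X S : Type*} [Mul S] (φ : X → S) : List X → Option S
  | [] => none
  | x :: xs => some (xs.foldl (fun a y => a * φ y) (φ x))

/-!
A substitution `φ : X → S¹` is the same as a choice of letters `Y` sent to `1` together with a
substitution into `S` of the remaining letters, and then `φ(w) = ψ(w_Y)`. Reading `sprod`
through `Option.elim · 1 (↑)`, which is injective, identities of `S¹` thus become identities of
`S` after deleting `Y`. The letters sent to `1` form a proper subset of `content w` unless all of
them are, in which case both sides equal `1` because `w` and `w'` have the same content.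
-/

theorem WithOne.coe_foldl_mul {X S : Type*} [Semigroup S] (ψ : X → S) :
    ∀ (l : List X) (a : S), ((l.foldl (fun b y => b * ψ y) a : S) : WithOne S) =
      a * (l.map fun x => (ψ x : WithOne S)).prod
  | [], a => by simp
  | x :: xs, a => by simp [WithOne.coe_foldl_mul ψ xs (a * ψ x), mul_assoc]

theorem elim_sprod {X S : Type*} [Semigroup S] (ψ : X → S) (l : List X) :
    (sprod ψ l).elim 1 (↑) = (l.map fun x => (ψ x : WithOne S)).prod := by
  cases l with
  | nil => rfl
  | cons x xs => simp [sprod, WithOne.coe_foldl_mul]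

theorem Option.elim_one_coe_injective {S : Type*} :
    Function.Injective fun o : Option S => o.elim (1 : WithOne S) (↑) := by
  rintro (_ | a) (_ | b) h <;> simp_all [eq_comm]

theorem List.prod_map_filter_of_eq_one {X M : Type*} [Monoid M] (f : X → M) (p : X → Bool) :
    ∀ l : List X, (∀ x ∈ l, p x = false → f x = 1) → ((l.filter p).map f).prod = (l.map f).prod
  | [], _ => rfl
  | x :: xs, h => by
    have ih := prod_map_filter_of_eq_one f p xs fun y hy => h y (mem_cons_of_mem _ hy)
    cases hx : p x
    · simp [hx, ih, h x mem_cons_self hx]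
    · simp [hx, ih]

theorem prod_map_eq_elim_sprod_filter {X S : Type*} [DecidableEq X] [Semigroup S]
    (Y : Finset X) (φ : X → WithOne S) (ψ : X → S) (v : List X)
    (hY : ∀ x ∈ v, x ∈ Y → φ x = 1) (hψ : ∀ x ∈ v, x ∉ Y → φ x = ψ x) :
    (v.map φ).prod = (sprod ψ (v.filter fun x => decide (x ∉ Y))).elim 1 (↑) := by
  rw [elim_sprod, ← List.prod_map_filter_of_eq_one φ (fun x => decide (x ∉ Y)) v fun x hx hxY => hY x hx (by simpa using hxY)]
  refine congrArg List.prod (List.map_congr_left fun x hx => ?_)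
  rw [List.mem_filter, decide_eq_true_iff] at hx
  exact hψ x hx.1 hx.2

theorem stmt_13_general {X S : Type*} [DecidableEq X] [Semigroup S]
    (w w' : List X)
    (hcontent : w.toFinset = w'.toFinset) :
    (∀ φ : X → WithOne S, (w.map φ).prod = (w'.map φ).prod) ↔
      ∀ Y : Finset X, Y ⊂ w.toFinset →
        ∀ φ : X → S,
          sprod φ (w.filter fun x => decide (x ∉ Y)) =
            sprod φ (w'.filter fun x => decide (x ∉ Y)) := by
  have hmem' : ∀ x ∈ w', x ∈ w := fun x hx =>
    List.mem_toFinset.mp (hcontent ▸ List.mem_toFinset.mpr hx)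
  constructor
  · intro h Y _ φ
    let Φ : X → WithOne S := fun x => if x ∈ Y then 1 else φ x
    have key (v : List X) := prod_map_eq_elim_sprod_filter Y Φ φ v
      (fun x _ hx => if_pos hx) (fun x _ hx => if_neg hx)
    exact Option.elim_one_coe_injective (by simp only [← key, h])
  · intro h φ
    classical
    by_cases hone : ∀ x ∈ w, φ x = 1
    · rw [List.prod_eq_one (by simpa using hone),
        List.prod_eq_one (by simpa using fun x hx => hone x (hmem' x hx))]
    push Not at hone
    obtain ⟨x₀, hx₀, hφx₀⟩ := hone
    obtain ⟨s₀, -⟩ := WithOne.ne_one_iff_exists.mp hφx₀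
    let Y := w.toFinset.filter fun x => φ x = 1
    have hY : Y ⊂ w.toFinset := Finset.filter_ssubset.mpr ⟨x₀, List.mem_toFinset.mpr hx₀, hφx₀⟩
    have key (v : List X) (hv : ∀ x ∈ v, x ∈ w) :=
      prod_map_eq_elim_sprod_filter Y φ (fun x => WithOne.unoneD s₀ (φ x)) v
        (fun x _ hx => (Finset.mem_filter.mp hx).2)
        (fun x hx hxY => by
          obtain ⟨s, hs⟩ := WithOne.ne_one_iff_exists.mp
            fun h1 => hxY (Finset.mem_filter.mpr ⟨List.mem_toFinset.mpr (hv x hx), h1⟩)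
          simp [← hs])
    rw [key w fun _ => id, key w' hmem', h Y hY]

/-- The monoid `S¹` (here `WithOne S`, i.e. `S` with an adjoined identity) satisfies an
identity `w ≈ w'` with `content w = content w'` if and only if for each proper subset
`Y` of the content of `w`, the identity `w_Y ≈ w'_Y` (obtained by deleting all letters
of `Y`; `Y = ∅` gives `w` itself) holds in `S`. -/
theorem stmt_13 {X S : Type*} [DecidableEq X] [Semigroup S]
    (w w' : List X) (hw : w ≠ []) (hw' : w' ≠ [])
    (hcontent : w.toFinset = w'.toFinset) :
    (∀ φ : X → WithOne S, (w.map φ).prod = (w'.map φ).prod) ↔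
      ∀ Y : Finset X, Y ⊂ w.toFinset →
        ∀ φ : X → S,
          sprod φ (w.filter fun x => decide (x ∉ Y)) =
            sprod φ (w'.filter fun x => decide (x ∉ Y)) :=
  stmt_13_general w w' hcontent
end

section
/- If two semigroups S₁ and S₂ satisfy exactly the same identities, then the monoids S₁¹ and S₂¹ (obtained by adjoining identity elements) also satisfy exactly the same identities among identities w ≈ w' with content(w) = content(w'). -/
section

variable {X S : Type*}

theorem prod_map_eq_prod_map_filter {M : Type*} [Monoid M] (φ f : X → M) (p : X → Prop)
    [DecidablePred p] (hp : ∀ x, p x → φ x = f x) (hnp : ∀ x, ¬p x → φ x = 1) (w : List X) :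
    (w.map φ).prod = ((w.filter p).map f).prod := by
  induction w with
  | nil => rfl
  | cons x w ih => by_cases hx : p x <;> simp [hx, hp, hnp, ih]

theorem exists_coe_eq_of_ne_one [Nonempty S] (φ : X → WithOne S) :
    ∃ ψ : X → S, ∀ x, φ x ≠ 1 → φ x = ψ x := by
  choose ψ hψ using fun x => show ∃ s : S, φ x ≠ 1 → φ x = s from
    WithOne.cases_on (φ x) ⟨Classical.arbitrary S, fun h => absurd rfl h⟩ fun s => ⟨s, fun _ => rfl⟩
  exact ⟨ψ, hψ⟩

section Semigroup

variable [Semigroup S]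

theorem coe_mul_prod_map_coe (ψ : X → S) (a : S) (w : List X) :
    (a : WithOne S) * (w.map fun x => (ψ x : WithOne S)).prod =
      ↑(w.foldl (fun b y => b * ψ y) a) := by
  induction w generalizing a with
  | nil => exact mul_one _
  | cons y w ih => rw [List.map_cons, List.prod_cons, ← mul_assoc, ← WithOne.coe_mul, ih]; rfl

theorem prod_map_coe_eq_elim_sprod (ψ : X → S) (w : List X) :
    (w.map fun x => (ψ x : WithOne S)).prod = (sprod ψ w).elim 1 (↑) := by
  cases w with
  | nil => rfl
  | cons x w => exact coe_mul_prod_map_coe ψ (ψ x) w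

theorem sprod_eq_sprod_iff (ψ : X → S) (u u' : List X) :
    sprod ψ u = sprod ψ u' ↔
      (u.map fun x => (ψ x : WithOne S)).prod = (u'.map fun x => (ψ x : WithOne S)).prod := by
  rw [prod_map_coe_eq_elim_sprod, prod_map_coe_eq_elim_sprod]
  cases sprod ψ u <;> cases sprod ψ u' <;> simp

theorem prod_map_eq_of_sprod_eq {S₁ S₂ : Type*} [Semigroup S₁] [Semigroup S₂]
    (h : ∀ u u' : List X, u ≠ [] → u' ≠ [] →
      (∀ φ : X → S₁, sprod φ u = sprod φ u') → ∀ φ : X → S₂, sprod φ u = sprod φ u')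
    {w w' : List X} (hc : ∀ x, x ∈ w ↔ x ∈ w')
    (h₁ : ∀ φ : X → WithOne S₁, (w.map φ).prod = (w'.map φ).prod) (φ : X → WithOne S₂) :
    (w.map φ).prod = (w'.map φ).prod := by
  classical
  let p x := φ x ≠ 1
  have hnp : ∀ x, ¬p x → φ x = 1 := fun _ => not_not.mp
  have hempty : w.filter p = [] ↔ w'.filter p = [] := by simp [List.filter_eq_nil_iff, hc]
  by_cases hu : w.filter p = []
  · rw [prod_map_eq_prod_map_filter φ φ p (fun _ _ => rfl) hnp w,
      prod_map_eq_prod_map_filter φ φ p (fun _ _ => rfl) hnp w', hu, hempty.mp hu]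
  obtain ⟨x₀, hx₀⟩ := List.exists_mem_of_ne_nil _ hu
  obtain ⟨s₀, -⟩ := WithOne.ne_one_iff_exists.mp (of_decide_eq_true (List.mem_filter.mp hx₀).2)
  have : Nonempty S₂ := ⟨s₀⟩
  obtain ⟨ψ, hψ⟩ := exists_coe_eq_of_ne_one φ
  have hS₁ (ψ₁ : X → S₁) : sprod ψ₁ (w.filter p) = sprod ψ₁ (w'.filter p) := by
    let φ₁ x := if p x then (ψ₁ x : WithOne S₁) else 1
    have hp₁ x (hx : p x) : φ₁ x = ψ₁ x := if_pos hx
    have hnp₁ x (hx : ¬p x) : φ₁ x = 1 := if_neg hx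
    have := h₁ φ₁
    rwa [prod_map_eq_prod_map_filter φ₁ _ p hp₁ hnp₁ w,
      prod_map_eq_prod_map_filter φ₁ _ p hp₁ hnp₁ w', ← sprod_eq_sprod_iff] at this
  rw [prod_map_eq_prod_map_filter φ _ p hψ hnp w, prod_map_eq_prod_map_filter φ _ p hψ hnp w',
    ← sprod_eq_sprod_iff]
  exact h _ _ hu (hempty.not.mp hu) hS₁ ψ

end Semigroup

end

theorem stmt_14_general {X S₁ S₂ : Type*} [DecidableEq X]
    [Semigroup S₁] [Semigroup S₂]
    (heq : ∀ w w' : List X, w ≠ [] → w' ≠ [] →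
      ((∀ φ : X → S₁, sprod φ w = sprod φ w') ↔ (∀ φ : X → S₂, sprod φ w = sprod φ w'))) :
    ∀ w w' : List X, w ≠ [] → w' ≠ [] → w.toFinset = w'.toFinset →
      ((∀ φ : X → WithOne S₁, (w.map φ).prod = (w'.map φ).prod) ↔
        (∀ φ : X → WithOne S₂, (w.map φ).prod = (w'.map φ).prod)) := by
  intro w w' _ _ hc
  have hmem x : x ∈ w ↔ x ∈ w' := by rw [← List.mem_toFinset, hc, List.mem_toFinset]
  exact ⟨prod_map_eq_of_sprod_eq (fun u u' hu hu' => (heq u u' hu hu').mp) hmem,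
    prod_map_eq_of_sprod_eq (fun u u' hu hu' => (heq u u' hu hu').mpr) hmem⟩

/-- If two semigroups `S₁` and `S₂` satisfy exactly the same identities, then the
monoids `S₁¹` and `S₂¹` obtained by adjoining identity elements satisfy exactly the
same identities among identities `w ≈ w'` with `content w = content w'`. -/
theorem stmt_14 {X S₁ S₂ : Type*} [DecidableEq X] [Countable X] [Infinite X]
    [Semigroup S₁] [Semigroup S₂]
    (heq : ∀ w w' : List X, w ≠ [] → w' ≠ [] →
      ((∀ φ : X → S₁, sprod φ w = sprod φ w') ↔ (∀ φ : X → S₂, sprod φ w = sprod φ w'))) :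
    ∀ w w' : List X, w ≠ [] → w' ≠ [] → w.toFinset = w'.toFinset →
      ((∀ φ : X → WithOne S₁, (w.map φ).prod = (w'.map φ).prod) ↔
        (∀ φ : X → WithOne S₂, (w.map φ).prod = (w'.map φ).prod)) :=
  stmt_14_general heq
end

section
/- In the Rees matrix semigroup S = M({1,2}, C∞, {1,2}; P) over the infinite cyclic group C∞ = ⟨c⟩ with sandwich matrix P = ((e, c), (e, e)), if an identity w ≈ w' holds in S then w and w' begin with the same letter. -/
/-- The sandwich matrix `P = ((e, c), (e, e))` over the infinite cyclic group
`C∞ = Multiplicative ℤ` with generator `c = ofAdd 1`. -/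
def pMat : Fin 2 → Fin 2 → Multiplicative ℤ := fun l j =>
  if l = 0 ∧ j = 1 then Multiplicative.ofAdd 1 else 1

/-- The Rees matrix semigroup `S = M({1,2}, C∞, {1,2}; P)`. -/
def ReesS : Type := Fin 2 × Multiplicative ℤ × Fin 2

instance : Mul ReesS :=
  ⟨fun a b => (a.1, a.2.1 * pMat a.2.2 b.1 * b.2.1, b.2.2)⟩

instance : Semigroup ReesS where
  mul_assoc := by
    rintro ⟨i, g, l⟩ ⟨j, h, m⟩ ⟨k, f, r⟩
    show (i, (g * pMat l j * h) * pMat m k * f, r) =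
      (i, g * pMat l j * (h * pMat m k * f), r)
    simp only [mul_assoc]

/-!
The row index of a product in `S` is the row index of its first factor, so under any
substitution the row index of the value of a word is that of the value of its first letter.
Sending the first letter of `w` to row `1` and every other letter to row `2` therefore reads
off from the value of `w'` whether `w'` begins with the same letter.
-/

theorem ReesS.fst_mul (a b : ReesS) : (a * b).1 = a.1 := rfl

theorem ReesS.fst_map_eq_fst_map_head {X : Type*} (φ : FreeSemigroup X →ₙ* ReesS)
    (u : FreeSemigroup X) : (φ u).1 = (φ (FreeSemigroup.of u.head)).1 := by
  induction u using FreeSemigroup.recOnMul with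
  | ih1 x => rfl
  | ih2 x u _ _ => rw [map_mul, ReesS.fst_mul, FreeSemigroup.head_mul]; rfl

/-- If an identity `w ≈ w'` holds in the Rees matrix semigroup
`M({1,2}, C∞, {1,2}; P)` with `P = ((e, c), (e, e))`, then `w` and `w'` begin with the
same letter. -/
theorem stmt_17 {X : Type*} (w w' : FreeSemigroup X)
    (h : ∀ φ : FreeSemigroup X →ₙ* ReesS, φ w = φ w') :
    w.head = w'.head := by
  classical
  let f : X → ReesS := fun x => (if x = w.head then 0 else 1, 1, 0)
  have hrow : (f w.head).1 = (f w'.head).1 := by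
    simpa [ReesS.fst_map_eq_fst_map_head] using congrArg Prod.fst (h (FreeSemigroup.lift f))
  by_contra hne
  simp [f, Ne.symm hne] at hrow
end
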